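/- Let f, g_1, …, g_m : ℝⁿ → ℝⁿ be continuously differentiable with, for all z ∈ ℝⁿ and all i: ‖f(z)‖ ≤ K, ‖g_i(z)‖ ≤ K_i, ‖Df(z)‖ ≤ L, ‖Dg_i(z)‖ ≤ L_i, and λ∞(Df(z)) ≤ 0. Let v_i : [t_k, t_k+h] → ℝ be measurable with |v_i(t)| ≤ V_i, and let w_i be the constants w_i = (1/h)∫_{t_k}^{t_k+h} v_i(t) dt. Let x be a solution of ẋ = f(x) + Σ_i g_i(x)v_i(t) and y a solution of ẏ = f(y) + Σ_i g_i(y)w_i on [t_k, t_k+h] with y(t_k) = x(t_k). Then, with K' = Σ_i V_i K_i and L' = Σ_i V_i L_i, ‖x(t_k+h) − y(t_k+h)‖ ≤ h²·( (K+K')·L'/3 + 2·K'·(L+L') ). -/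

import Mathlib

/-!
Write `x - y = ψ + P` with `P t = ∫ₜₖᵗ ∑ᵢ (vᵢ - wᵢ) gᵢ(x)`. Since `λ∞(Df) ≤ 0`, short Euler steps
of `f` do not separate states in the sup norm, and a right Dini derivative comparison then bounds
the growth of `‖X - Y‖` by `∫ ‖r‖` whenever `X - Y` is driven by `f X - f Y` plus a perturbation
`r`. Applied to `x - y` this gives `‖x - y‖ ≤ 2K'(t - tₖ)`; applied to `ψ = x - (y + P)`, whose
perturbation is at most `L‖P‖ + L'‖x - y‖ ≤ 2K'(L + L')(t - tₖ)`, it gives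
`‖ψ(tₖ + h)‖ ≤ K'(L + L')h²`. Finally `P(tₖ + h)` integrates the mean-zero `vᵢ - wᵢ` against the
`Lᵢ(K + K')`-Lipschitz `gᵢ(x(s))`, and `2h ∫ (v - v̄) φ = ∬ (v s - v σ) (φ s - φ σ)` bounds it
by `Vᵢ Lᵢ (K + K') h² / 3`.
-/

open MeasureTheory Set

/-- The logarithmic norm `λ∞(A) = max_k ( a_{kk} + Σ_{i≠k} |a_{ki}| )` of a linear map on
`ℝⁿ` with the supremum norm, expressed via its matrix entries `a_{ki} = (A eᵢ)_k`. -/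
noncomputable def logNormInf {n : ℕ} (A : (Fin n → ℝ) →L[ℝ] (Fin n → ℝ)) : ℝ :=
  ⨆ k, (A (Pi.single k 1) k + ∑ i ∈ Finset.univ.erase k, |A (Pi.single i 1) k|)

open Filter Topology

lemma MeasureTheory.IntegrableOn.intervalIntegrable_of_mem_Icc {E : Type*}
    [NormedAddCommGroup E] {G : ℝ → E} {a b s t : ℝ} (hG : IntegrableOn G (Icc a b))
    (hs : s ∈ Icc a b) (ht : t ∈ Icc a b) : IntervalIntegrable G volume s t :=
  (hG.mono_set (uIcc_subset_Icc hs ht)).intervalIntegrable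

variable {E : Type*} [NormedAddCommGroup E] [NormedSpace ℝ E]

lemma continuousOn_primitive_of_integrableOn_Icc {G : ℝ → E} {a b : ℝ}
    (hG : IntegrableOn G (Icc a b)) : ContinuousOn (fun t => ∫ s in a..t, G s) (Icc a b) :=
  (intervalIntegral.continuousOn_primitive hG).congr fun _ ht =>
    intervalIntegral.integral_of_le ht.1

lemma HasDerivWithinAt.eventually_norm_add_le {Λ : ℝ → E} {c w : E} {t ε : ℝ}
    (hΛ : HasDerivWithinAt Λ c (Ioi t) t) (hΛt : Λ t = 0)
    (hc : ∀ᶠ s : ℝ in 𝓝[>] 0, ‖w + s • c‖ ≤ ‖w‖) (hε : 0 < ε) :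
    ∀ᶠ z in 𝓝[>] t, ‖w + Λ z‖ ≤ ‖w‖ + ε * (z - t) := by
  have hshift : Tendsto (fun z => z - t) (𝓝[>] t) (𝓝[>] 0) :=
    tendsto_nhdsWithin_of_tendsto_nhds_of_eventually_within _
      (tendsto_nhdsWithin_of_tendsto_nhds (by simpa using (continuous_sub_right t).tendsto t))
      (eventually_nhdsWithin_of_forall fun z (hz : t < z) => show 0 < z - t from sub_pos.2 hz)
  filter_upwards [(hasDerivWithinAt_iff_isLittleO.1 hΛ).def hε, hshift.eventually hc,
    self_mem_nhdsWithin] with z hlin hstep (hz : t < z)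
  rw [hΛt, sub_zero, Real.norm_eq_abs, abs_of_pos (sub_pos.2 hz)] at hlin
  calc ‖w + Λ z‖ = ‖(w + (z - t) • c) + (Λ z - (z - t) • c)‖ := by congr 1; abel
    _ ≤ ‖w‖ + ε * (z - t) := (norm_add_le _ _).trans (add_le_add hstep hlin)

section DissipativeComparison

variable [CompleteSpace E] {u F r : ℝ → E} {ρ : ℝ → ℝ} {a b : ℝ}

lemma eventually_norm_le_of_eventually_norm_add_smul_le (hF : ContinuousOn F (Icc a b))
    (hr : IntegrableOn r (Icc a b)) (hρ : IntegrableOn ρ (Icc a b))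
    (hrρ : ∀ s ∈ Icc a b, ‖r s‖ ≤ ρ s)
    (hu : ∀ t ∈ Icc a b, u t = u a + ∫ s in a..t, (F s + r s)) {t ε : ℝ} (ht : t ∈ Ico a b)
    (hdiss : ∀ᶠ s : ℝ in 𝓝[>] 0, ‖u t + s • F t‖ ≤ ‖u t‖) (hε : 0 < ε) :
    ∀ᶠ z in 𝓝[>] t, ‖u z‖ ≤ ‖u t‖ + (∫ s in t..z, ρ s) + ε * (z - t) := by
  have htI : t ∈ Icc a b := Ico_subset_Icc_self ht
  have ha : a ∈ Icc a b := left_mem_Icc.2 (htI.1.trans htI.2)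
  have hFi : IntegrableOn F (Icc a b) := hF.integrableOn_Icc
  have hFr : IntegrableOn (fun s => F s + r s) (Icc a b) := hFi.add hr
  have hderiv : HasDerivWithinAt (fun z => ∫ s in t..z, F s) (F t) (Ioi t) t :=
    (intervalIntegral.integral_hasDerivWithinAt_right (s := Ici t) (t := Ioi t)
      IntervalIntegrable.refl
      ((hF.stronglyMeasurableAtFilter_nhdsWithin measurableSet_Icc t).filter_mono
        (nhdsWithin_le_of_mem (Icc_mem_nhdsGT_of_mem ht)))
      ((hF t htI).mono_of_mem_nhdsWithin (Icc_mem_nhdsGT_of_mem ht))).Ioi_of_Ici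
  filter_upwards [hderiv.eventually_norm_add_le (by simp) hdiss hε, Ioc_mem_nhdsGT ht.2]
    with z hlocal hz
  have hzI : z ∈ Icc a b := ⟨htI.1.trans hz.1.le, hz.2⟩
  have huz : u z = (u t + ∫ s in t..z, F s) + ∫ s in t..z, r s := by
    rw [hu z hzI, hu t htI, add_assoc, ← intervalIntegral.integral_add
      (hFi.intervalIntegrable_of_mem_Icc htI hzI) (hr.intervalIntegrable_of_mem_Icc htI hzI),
      ← intervalIntegral.integral_interval_sub_left (hFr.intervalIntegrable_of_mem_Icc ha hzI)
        (hFr.intervalIntegrable_of_mem_Icc ha htI)]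
    abel
  have hrz : ‖∫ s in t..z, r s‖ ≤ ∫ s in t..z, ρ s :=
    intervalIntegral.norm_integral_le_of_norm_le hz.1.le
      (ae_of_all _ fun s hs => hrρ s ⟨htI.1.trans hs.1.le, hs.2.trans hz.2⟩)
      (hρ.intervalIntegrable_of_mem_Icc htI hzI)
  rw [huz]
  linarith [norm_add_le (u t + ∫ s in t..z, F s) (∫ s in t..z, r s)]

theorem norm_le_norm_add_integral_of_eventually_norm_add_smul_le
    (hF : ContinuousOn F (Icc a b)) (hr : IntegrableOn r (Icc a b))
    (hρ : IntegrableOn ρ (Icc a b)) (hrρ : ∀ s ∈ Icc a b, ‖r s‖ ≤ ρ s)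
    (hu : ∀ t ∈ Icc a b, u t = u a + ∫ s in a..t, (F s + r s))
    (hdiss : ∀ t ∈ Ico a b, ∀ᶠ s : ℝ in 𝓝[>] 0, ‖u t + s • F t‖ ≤ ‖u t‖) :
    ∀ t ∈ Icc a b, ‖u t‖ ≤ ‖u a‖ + ∫ s in a..t, ρ s := by
  set Φ : ℝ → ℝ := fun t => ‖u t‖ - ∫ s in a..t, ρ s
  have hΦ : ContinuousOn Φ (Icc a b) := by
    refine ContinuousOn.sub ?_ (continuousOn_primitive_of_integrableOn_Icc hρ)
    have : ContinuousOn (fun t => u a + ∫ s in a..t, (F s + r s)) (Icc a b) :=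
      continuousOn_const.add (continuousOn_primitive_of_integrableOn_Icc
        (hF.integrableOn_Icc.add hr))
    exact this.norm.congr fun t ht => congrArg norm (hu t ht)
  -- the right Dini derivative of `Φ` is nonpositive
  have hslope : ∀ t ∈ Ico a b, ∀ ε, 0 < ε → ∃ᶠ z in 𝓝[>] t, slope Φ t z < ε := by
    intro t ht ε hε
    have htI : t ∈ Icc a b := Ico_subset_Icc_self ht
    refine Eventually.frequently ?_
    filter_upwards [eventually_norm_le_of_eventually_norm_add_smul_le hF hr hρ hrρ hu ht
      (hdiss t ht) (half_pos hε), Ioc_mem_nhdsGT ht.2] with z hz hzb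
    have hρz : ∫ s in a..z, ρ s = (∫ s in a..t, ρ s) + ∫ s in t..z, ρ s :=
      (intervalIntegral.integral_add_adjacent_intervals
        (hρ.intervalIntegrable_of_mem_Icc (left_mem_Icc.2 (htI.1.trans htI.2)) htI)
        (hρ.intervalIntegrable_of_mem_Icc htI ⟨htI.1.trans hzb.1.le, hzb.2⟩)).symm
    rw [slope_def_field, div_lt_iff₀ (sub_pos.2 hzb.1)]
    simp only [Φ, hρz]
    nlinarith [hzb.1]
  intro t ht
  have := image_le_of_liminf_slope_right_le_deriv_boundary hΦ (B := fun _ => Φ a) (B' := 0)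
    le_rfl continuousOn_const (fun _ _ => hasDerivWithinAt_const _ _ _) hslope ht
  simp only [Φ, intervalIntegral.integral_same, sub_zero] at this
  linarith

end DissipativeComparison

/-- The derivative-free form of `λ(Df) ≤ 0`: short forward Euler steps of `ż = f z` do not
separate two states. -/
def IsDissipative (f : E → E) : Prop :=
  ∀ p q : E, ∀ᶠ s : ℝ in 𝓝[>] 0, ‖p - q + s • (f p - f q)‖ ≤ ‖p - q‖

section LogNorm

variable {n : ℕ}

lemma apply_eq_sum_mul_apply_single (A : (Fin n → ℝ) →L[ℝ] (Fin n → ℝ)) (u : Fin n → ℝ)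
    (k : Fin n) : A u k = ∑ i, u i * A (Pi.single i 1) k := by
  conv_lhs => rw [pi_eq_sum_univ' u]
  simp [Finset.sum_apply]

lemma mul_apply_nonpos_of_logNormInf_nonpos {A : (Fin n → ℝ) →L[ℝ] (Fin n → ℝ)}
    (hA : logNormInf A ≤ 0) {u : Fin n → ℝ} {k : Fin n} (hk : ∀ j, |u j| ≤ |u k|) :
    u k * A u k ≤ 0 := by
  have hrow : A (Pi.single k 1) k + ∑ i ∈ Finset.univ.erase k, |A (Pi.single i 1) k| ≤ 0 :=
    (le_ciSup (Set.finite_range _).bddAbove k).trans hA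
  have hoff : ∀ i, u k * (u i * A (Pi.single i 1) k) ≤ u k ^ 2 * |A (Pi.single i 1) k| :=
    fun i => calc
      u k * (u i * A (Pi.single i 1) k) ≤ |u k| * (|u i| * |A (Pi.single i 1) k|) := by
        rw [← abs_mul, ← abs_mul]; exact le_abs_self _
      _ ≤ |u k| * (|u k| * |A (Pi.single i 1) k|) := by
        gcongr ?_ * (?_ * _); exact hk i
      _ = u k ^ 2 * |A (Pi.single i 1) k| := by rw [← sq_abs]; ring
  calc u k * A u k
      = u k ^ 2 * A (Pi.single k 1) k
        + ∑ i ∈ Finset.univ.erase k, u k * (u i * A (Pi.single i 1) k) := by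
        rw [apply_eq_sum_mul_apply_single, Finset.mul_sum,
          ← Finset.add_sum_erase _ _ (Finset.mem_univ k)]
        ring
    _ ≤ u k ^ 2 * (A (Pi.single k 1) k + ∑ i ∈ Finset.univ.erase k, |A (Pi.single i 1) k|) := by
        rw [mul_add, Finset.mul_sum]
        exact add_le_add_right (Finset.sum_le_sum fun i _ => hoff i) _
    _ ≤ 0 := mul_nonpos_of_nonneg_of_nonpos (sq_nonneg _) hrow

lemma sub_mul_sub_nonpos_of_logNormInf_fderiv_nonpos {f : (Fin n → ℝ) → (Fin n → ℝ)}
    (hf : Differentiable ℝ f) (hΛ : ∀ z, logNormInf (fderiv ℝ f z) ≤ 0) {a b : Fin n → ℝ}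
    {k : Fin n} (hk : ∀ j, |(a - b) j| ≤ |(a - b) k|) : (a - b) k * (f a - f b) k ≤ 0 := by
  set u := a - b
  have hderiv : ∀ θ : ℝ, HasDerivAt (fun θ : ℝ => u k * f (b + θ • u) k)
      (u k * fderiv ℝ f (b + θ • u) u k) θ := fun θ => by
    have hline : HasDerivAt (fun θ : ℝ => b + θ • u) u θ := by
      simpa using ((hasDerivAt_id θ).smul_const u).const_add b
    exact (hasDerivAt_pi.1 ((hf _).hasFDerivAt.comp_hasDerivAt θ hline) k).const_mul (u k)
  have := antitone_of_hasDerivAt_nonpos hderiv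
    (fun θ => mul_apply_nonpos_of_logNormInf_nonpos (hΛ _) hk) zero_le_one
  simp only [one_smul, zero_smul, add_zero, u, add_sub_cancel] at this
  rw [Pi.sub_apply, mul_sub]
  linarith

lemma abs_add_le_abs_of_mul_nonpos {x y : ℝ} (hxy : x * y ≤ 0) (hyx : |y| ≤ |x|) :
    |x + y| ≤ |x| := by
  have hy : y * y ≤ -(x * y) := by
    have := mul_le_mul_of_nonneg_right hyx (abs_nonneg y)
    rwa [abs_mul_abs_self, ← abs_mul, abs_of_nonpos hxy] at this
  exact sq_le_sq.1 (by nlinarith)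

lemma eventually_norm_add_smul_le {u c : Fin n → ℝ} (hu : u ≠ 0)
    (hmax : ∀ k, (∀ j, |u j| ≤ |u k|) → u k * c k ≤ 0) :
    ∀ᶠ s : ℝ in 𝓝[>] 0, ‖u + s • c‖ ≤ ‖u‖ := by
  have hle : ∀ j, |u j| ≤ ‖u‖ := fun j => by simpa using norm_le_pi_norm u j
  have hcoord : ∀ k, ∀ᶠ s : ℝ in 𝓝[>] 0, |u k + s * c k| ≤ ‖u‖ := by
    intro k
    rcases (hle k).lt_or_eq with hlt | heq
    · refine Eventually.filter_mono nhdsWithin_le_nhds ?_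
      exact (ContinuousAt.eventually_lt (x₀ := 0) (by fun_prop) continuousAt_const
        (by simpa using hlt)).mono fun s hs => hs.le
    · have hsmall : ∀ᶠ s : ℝ in 𝓝 0, |s * c k| < |u k| :=
        ContinuousAt.eventually_lt (by fun_prop) continuousAt_const
          (by simpa [heq] using norm_pos_iff.2 hu)
      filter_upwards [nhdsWithin_le_nhds hsmall, self_mem_nhdsWithin] with s hs (hs0 : 0 < s)
      rw [← heq]
      refine abs_add_le_abs_of_mul_nonpos ?_ hs.le
      nlinarith [hmax k fun j => heq ▸ hle j]
  filter_upwards [eventually_all.2 hcoord] with s hs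
  exact pi_norm_le_iff_of_nonneg (norm_nonneg u) |>.2 fun k => by simpa using hs k

lemma isDissipative_of_logNormInf_fderiv_nonpos {f : (Fin n → ℝ) → (Fin n → ℝ)}
    (hf : Differentiable ℝ f) (hΛ : ∀ z, logNormInf (fderiv ℝ f z) ≤ 0) : IsDissipative f := by
  intro p q
  rcases eq_or_ne p q with rfl | hpq
  · simp
  exact eventually_norm_add_smul_le (sub_ne_zero.2 hpq)
    fun k hk => sub_mul_sub_nonpos_of_logNormInf_fderiv_nonpos hf hΛ hk

end LogNorm

section Averaging

variable {v : ℝ → ℝ} {φ : ℝ → E}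

lemma integral_sub_smul_sub [CompleteSpace E] {a b : ℝ}
    (hv : IntervalIntegrable v volume a b) (hφ : ContinuousOn φ (uIcc a b)) (s : ℝ) :
    ∫ σ in a..b, (v s - v σ) • (φ s - φ σ) =
      (b - a) • (v s • φ s) - v s • (∫ σ in a..b, φ σ) - (∫ σ in a..b, v σ) • φ s
        + ∫ σ in a..b, v σ • φ σ := by
  have hvφ : IntervalIntegrable (fun σ => v σ • φ σ) volume a b := hv.smul_continuousOn hφ
  have hvc : IntervalIntegrable (fun σ => v σ • φ s) volume a b :=
    hv.smul_continuousOn continuousOn_const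
  have hcφ : IntervalIntegrable (fun σ => v s • φ σ) volume a b := hφ.intervalIntegrable.smul _
  conv_lhs => simp only [smul_sub, sub_smul]
  rw [intervalIntegral.integral_sub (intervalIntegrable_const.sub hvc) (hcφ.sub hvφ),
    intervalIntegral.integral_sub intervalIntegrable_const hvc,
    intervalIntegral.integral_sub hcφ hvφ, intervalIntegral.integral_const,
    intervalIntegral.integral_smul, intervalIntegral.integral_smul_const]
  abel

lemma integral_integral_sub_smul_sub [CompleteSpace E] {a b : ℝ}
    (hv : IntervalIntegrable v volume a b) (hφ : ContinuousOn φ (uIcc a b)) :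
    ∫ s in a..b, ∫ σ in a..b, (v s - v σ) • (φ s - φ σ) =
      (2 * (b - a)) • (∫ s in a..b, v s • φ s) - (2 * ∫ s in a..b, v s) • ∫ s in a..b, φ s := by
  have hvφ : IntervalIntegrable (fun s => (b - a) • (v s • φ s)) volume a b :=
    (hv.smul_continuousOn hφ).smul _
  have hvc : IntervalIntegrable (fun s => v s • ∫ σ in a..b, φ σ) volume a b :=
    hv.smul_continuousOn continuousOn_const
  have hcφ : IntervalIntegrable (fun s => (∫ σ in a..b, v σ) • φ s) volume a b :=
    hφ.intervalIntegrable.smul _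
  simp only [integral_sub_smul_sub hv hφ]
  rw [intervalIntegral.integral_add ((hvφ.sub hvc).sub hcφ) intervalIntegrable_const,
    intervalIntegral.integral_sub (hvφ.sub hvc) hcφ, intervalIntegral.integral_sub hvφ hvc,
    intervalIntegral.integral_smul, intervalIntegral.integral_smul_const,
    intervalIntegral.integral_smul, intervalIntegral.integral_const]
  module

lemma integral_abs_sub {a b s : ℝ} (hs : s ∈ Icc a b) :
    ∫ σ in a..b, |s - σ| = ((s - a) ^ 2 + (b - s) ^ 2) / 2 := by
  have hcont : Continuous fun σ : ℝ => |s - σ| := by fun_prop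
  rw [← intervalIntegral.integral_add_adjacent_intervals (b := s) (hcont.intervalIntegrable _ _)
    (hcont.intervalIntegrable _ _)]
  have hleft : ∫ σ in a..s, |s - σ| = ∫ σ in a..s, (s - σ) :=
    intervalIntegral.integral_congr fun σ hσ => by
      rw [uIcc_of_le hs.1] at hσ; exact abs_of_nonneg (sub_nonneg.2 hσ.2)
  have hright : ∫ σ in s..b, |s - σ| = ∫ σ in s..b, (σ - s) :=
    intervalIntegral.integral_congr fun σ hσ => by
      rw [uIcc_of_le hs.2] at hσ; exact abs_sub_comm s σ ▸ abs_of_nonneg (sub_nonneg.2 hσ.1)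
  rw [hleft, hright, intervalIntegral.integral_comp_sub_left (fun x => x),
    intervalIntegral.integral_comp_sub_right (fun x => x)]
  simp only [integral_id]
  ring

lemma norm_integral_sub_smul_sub_le {a b V Λ s : ℝ} (hab : a ≤ b)
    (hvV : ∀ σ ∈ Icc a b, |v σ| ≤ V)
    (hφ : ∀ s ∈ Icc a b, ∀ σ ∈ Icc a b, ‖φ s - φ σ‖ ≤ Λ * |s - σ|) (hs : s ∈ Icc a b) :
    ‖∫ σ in a..b, (v s - v σ) • (φ s - φ σ)‖ ≤ V * Λ * ((s - a) ^ 2 + (b - s) ^ 2) := by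
  have hpt : ∀ σ ∈ Icc a b, ‖(v s - v σ) • (φ s - φ σ)‖ ≤ 2 * V * Λ * |s - σ| :=
    fun σ hσ => by
      rw [norm_smul, Real.norm_eq_abs, mul_assoc (2 * V)]
      refine mul_le_mul ?_ (hφ s hs σ hσ) (norm_nonneg _)
        (by linarith [(abs_nonneg _).trans (hvV s hs)])
      linarith [abs_sub (v s) (v σ), hvV s hs, hvV σ hσ]
  calc ‖∫ σ in a..b, (v s - v σ) • (φ s - φ σ)‖ ≤ ∫ σ in a..b, 2 * V * Λ * |s - σ| :=
        intervalIntegral.norm_integral_le_of_norm_le hab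
          (ae_of_all _ fun σ hσ => hpt σ (Ioc_subset_Icc_self hσ))
          ((by fun_prop : Continuous fun σ => 2 * V * Λ * |s - σ|).intervalIntegrable _ _)
    _ = V * Λ * ((s - a) ^ 2 + (b - s) ^ 2) := by
        rw [intervalIntegral.integral_const_mul, integral_abs_sub hs]; ring

lemma norm_integral_integral_sub_smul_sub_le {a b V Λ : ℝ} (hab : a ≤ b)
    (hvV : ∀ σ ∈ Icc a b, |v σ| ≤ V)
    (hφ : ∀ s ∈ Icc a b, ∀ σ ∈ Icc a b, ‖φ s - φ σ‖ ≤ Λ * |s - σ|) :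
    ‖∫ s in a..b, ∫ σ in a..b, (v s - v σ) • (φ s - φ σ)‖ ≤ 2 * V * Λ * (b - a) ^ 3 / 3 := by
  have hcont : Continuous fun s => V * Λ * ((s - a) ^ 2 + (b - s) ^ 2) := by fun_prop
  refine (intervalIntegral.norm_integral_le_of_norm_le hab (ae_of_all _ fun s hs =>
    norm_integral_sub_smul_sub_le hab hvV hφ (Ioc_subset_Icc_self hs))
      (hcont.intervalIntegrable _ _)).trans_eq ?_
  rw [intervalIntegral.integral_const_mul, intervalIntegral.integral_add
    ((by fun_prop : Continuous fun s : ℝ => (s - a) ^ 2).intervalIntegrable _ _)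
    ((by fun_prop : Continuous fun s : ℝ => (b - s) ^ 2).intervalIntegrable _ _),
    intervalIntegral.integral_comp_sub_right (fun x => x ^ 2),
    intervalIntegral.integral_comp_sub_left (fun x => x ^ 2)]
  simp only [integral_pow]
  ring

theorem norm_integral_sub_average_smul_le [CompleteSpace E] {a h V Λ : ℝ} (hh : 0 < h)
    (hv : IntegrableOn v (Icc a (a + h))) (hvV : ∀ s ∈ Icc a (a + h), |v s| ≤ V)
    (hφ : ∀ s ∈ Icc a (a + h), ∀ σ ∈ Icc a (a + h), ‖φ s - φ σ‖ ≤ Λ * |s - σ|) :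
    ‖∫ s in a..a + h, (v s - (1 / h) * ∫ σ in a..a + h, v σ) • φ s‖ ≤ V * Λ * h ^ 2 / 3 := by
  have hab : a ≤ a + h := by linarith
  have hφc : ContinuousOn φ (uIcc a (a + h)) := by
    rw [uIcc_of_le hab]
    exact (LipschitzOnWith.of_dist_le' fun s hs σ hσ => by
      simpa only [dist_eq_norm, Real.norm_eq_abs] using hφ s hs σ hσ).continuousOn
  have hvi : IntervalIntegrable v volume a (a + h) :=
    (intervalIntegrable_iff_integrableOn_Icc_of_le hab).2 hv
  -- symmetrisation: the double integrand below is `O(|s - σ|)`, unlike `(v - v̄) φ`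
  have hdouble : (2 * h) • ∫ s in a..a + h, (v s - (1 / h) * ∫ σ in a..a + h, v σ) • φ s =
      ∫ s in a..a + h, ∫ σ in a..a + h, (v s - v σ) • (φ s - φ σ) := by
    have hcφ : IntervalIntegrable (fun s => ((1 / h) * ∫ σ in a..a + h, v σ) • φ s) volume a
        (a + h) := hφc.intervalIntegrable.smul _
    rw [integral_integral_sub_smul_sub hvi hφc, add_sub_cancel_left]
    simp only [sub_smul]
    rw [intervalIntegral.integral_sub (hvi.smul_continuousOn hφc) hcφ,
      intervalIntegral.integral_smul, smul_sub, smul_smul]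
    congr 2
    field_simp
  have hnorm := norm_integral_integral_sub_smul_sub_le hab hvV hφ
  rw [← hdouble, norm_smul, Real.norm_eq_abs, abs_of_pos (by positivity), add_sub_cancel_left]
    at hnorm
  nlinarith

lemma abs_average_le {a h V : ℝ} (hh : 0 < h) (hvV : ∀ s ∈ Icc a (a + h), |v s| ≤ V) :
    |(1 / h) * ∫ s in a..a + h, v s| ≤ V := by
  have hab : a ≤ a + h := by linarith
  have : ‖∫ s in a..a + h, v s‖ ≤ V * |a + h - a| :=
    intervalIntegral.norm_integral_le_of_norm_le_const fun s hs => by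
      simpa using hvV s (uIcc_subset_Icc (left_mem_Icc.2 hab) (right_mem_Icc.2 hab)
        (uIoc_subset_uIcc hs))
  rw [add_sub_cancel_left, abs_of_pos hh, Real.norm_eq_abs] at this
  rw [abs_mul, abs_of_pos (one_div_pos.2 hh), one_div, inv_mul_le_iff₀ hh]
  linarith

end Averaging

section ControlAffine

variable {ι : Type*} [Fintype ι]

lemma norm_sub_le_of_norm_fderiv_le {f : E → E} {L : ℝ} (hf : Differentiable ℝ f)
    (hL : ∀ z, ‖fderiv ℝ f z‖ ≤ L) (p q : E) : ‖f p - f q‖ ≤ L * ‖p - q‖ :=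
  convex_univ.norm_image_sub_le_of_norm_fderiv_le (fun z _ => hf z) (fun z _ => hL z)
    (mem_univ q) (mem_univ p)

lemma norm_sum_smul_le {c V K : ι → ℝ} {z : ι → E} (hc : ∀ i, |c i| ≤ V i)
    (hz : ∀ i, ‖z i‖ ≤ K i) : ‖∑ i, c i • z i‖ ≤ ∑ i, V i * K i :=
  (norm_sum_le _ _).trans <| Finset.sum_le_sum fun i _ => by
    rw [norm_smul, Real.norm_eq_abs]
    exact mul_le_mul (hc i) (hz i) (norm_nonneg _) ((abs_nonneg _).trans (hc i))

lemma norm_integral_sum_smul_le {c : ι → ℝ → ℝ} {G : ι → ℝ → E} {V K : ι → ℝ} {a t : ℝ}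
    (hat : a ≤ t) (hc : ∀ i, ∀ s ∈ Icc a t, |c i s| ≤ V i)
    (hG : ∀ i, ∀ s ∈ Icc a t, ‖G i s‖ ≤ K i) :
    ‖∫ s in a..t, ∑ i, c i s • G i s‖ ≤ (∑ i, V i * K i) * (t - a) := by
  have := intervalIntegral.norm_integral_le_of_norm_le_const (a := a) (b := t)
    (f := fun s => ∑ i, c i s • G i s) fun s hs => by
      rw [uIoc_of_le hat] at hs
      exact norm_sum_smul_le (fun i => hc i s (Ioc_subset_Icc_self hs))
        fun i => hG i s (Ioc_subset_Icc_self hs)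
  rwa [abs_of_nonneg (sub_nonneg.2 hat)] at this

lemma norm_integral_sum_sub_smul_le {g : ι → E → E} {c d : ι → ℝ → ℝ} {x : ℝ → E}
    {Kg V : ι → ℝ} {a b t : ℝ} (hgK : ∀ i z, ‖g i z‖ ≤ Kg i)
    (hcV : ∀ i, ∀ s ∈ Icc a b, |c i s| ≤ V i) (hdV : ∀ i, ∀ s ∈ Icc a b, |d i s| ≤ V i)
    (ht : t ∈ Icc a b) :
    ‖∫ s in a..t, ∑ i, (c i s - d i s) • g i (x s)‖ ≤ 2 * (∑ i, V i * Kg i) * (t - a) := by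
  have := norm_integral_sum_smul_le (V := fun i => V i + V i) ht.1
    (fun i s hs => (abs_sub _ _).trans (add_le_add (hcV i s ⟨hs.1, hs.2.trans ht.2⟩)
      (hdV i s ⟨hs.1, hs.2.trans ht.2⟩))) fun i s _ => hgK i (x s)
  rwa [show ∑ i, (V i + V i) * Kg i = 2 * ∑ i, V i * Kg i by
    simp only [Finset.mul_sum]; exact Finset.sum_congr rfl fun i _ => by ring] at this

lemma norm_sub_add_sum_smul_sub_le {f : E → E} {g : ι → E → E} {L : ℝ} {Lg V d : ι → ℝ}
    (hf : Differentiable ℝ f) (hfL : ∀ z, ‖fderiv ℝ f z‖ ≤ L) (hg : ∀ i, Differentiable ℝ (g i))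
    (hgL : ∀ i z, ‖fderiv ℝ (g i) z‖ ≤ Lg i) (hd : ∀ i, |d i| ≤ V i) (p q r : E) :
    ‖f (q + r) - f q + ∑ i, d i • (g i p - g i q)‖ ≤ L * ‖r‖ + (∑ i, V i * Lg i) * ‖p - q‖ := by
  refine (norm_add_le _ _).trans (add_le_add ?_ ?_)
  · simpa using norm_sub_le_of_norm_fderiv_le hf hfL (q + r) q
  · simpa only [Finset.sum_mul, mul_assoc] using
      norm_sum_smul_le hd fun i => norm_sub_le_of_norm_fderiv_le (hg i) (hgL i) p q

lemma integrableOn_sum_smul {c : ι → ℝ → ℝ} {G : ι → ℝ → E} {a b : ℝ}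
    (hc : ∀ i, IntegrableOn (c i) (Icc a b)) (hG : ∀ i, ContinuousOn (G i) (Icc a b)) :
    IntegrableOn (fun s => ∑ i, c i s • G i s) (Icc a b) :=
  integrable_finsetSum _ fun i _ => (hc i).smul_continuousOn (hG i) isCompact_Icc

def IsControlAffineSolution (f : E → E) (g : ι → E → E) (c : ι → ℝ → ℝ) (x : ℝ → E)
    (a b : ℝ) : Prop :=
  ContinuousOn x (Icc a b) ∧
    ∀ t ∈ Icc a b, x t = x a + ∫ s in a..t, (f (x s) + ∑ i, c i s • g i (x s))

namespace IsControlAffineSolution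

variable {f : E → E} {g : ι → E → E} {c d : ι → ℝ → ℝ} {x y : ℝ → E} {a b : ℝ}

lemma integrableOn (hx : IsControlAffineSolution f g c x a b) (hf : Continuous f)
    (hg : ∀ i, Continuous (g i)) (hc : ∀ i, IntegrableOn (c i) (Icc a b)) :
    IntegrableOn (fun s => f (x s) + ∑ i, c i s • g i (x s)) (Icc a b) :=
  (hf.comp_continuousOn hx.1).integrableOn_Icc.add
    (integrableOn_sum_smul hc fun i => (hg i).comp_continuousOn hx.1)

lemma sub_eq_integral (hx : IsControlAffineSolution f g c x a b) (hf : Continuous f)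
    (hg : ∀ i, Continuous (g i)) (hc : ∀ i, IntegrableOn (c i) (Icc a b)) {s t : ℝ}
    (hs : s ∈ Icc a b) (ht : t ∈ Icc a b) :
    x t - x s = ∫ σ in s..t, (f (x σ) + ∑ i, c i σ • g i (x σ)) := by
  have ha : a ∈ Icc a b := left_mem_Icc.2 (hs.1.trans hs.2)
  have hint := hx.integrableOn hf hg hc
  rw [hx.2 t ht, hx.2 s hs, add_sub_add_left_eq_sub, intervalIntegral.integral_interval_sub_left
    (hint.intervalIntegrable_of_mem_Icc ha ht) (hint.intervalIntegrable_of_mem_Icc ha hs)]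

lemma norm_sub_le {K : ℝ} {Kg V : ι → ℝ} (hx : IsControlAffineSolution f g c x a b)
    (hf : Continuous f) (hfK : ∀ z, ‖f z‖ ≤ K) (hg : ∀ i, Continuous (g i))
    (hgK : ∀ i z, ‖g i z‖ ≤ Kg i) (hc : ∀ i, IntegrableOn (c i) (Icc a b))
    (hcV : ∀ i, ∀ s ∈ Icc a b, |c i s| ≤ V i) {s t : ℝ} (hs : s ∈ Icc a b) (ht : t ∈ Icc a b) :
    ‖x t - x s‖ ≤ (K + ∑ i, V i * Kg i) * |t - s| := by
  rw [hx.sub_eq_integral hf hg hc hs ht]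
  refine intervalIntegral.norm_integral_le_of_norm_le_const fun σ hσ => ?_
  have hσ' : σ ∈ Icc a b := uIcc_subset_Icc hs ht (uIoc_subset_uIcc hσ)
  exact (norm_add_le _ _).trans
    (add_le_add (hfK _) (norm_sum_smul_le (fun i => hcV i σ hσ') fun i => hgK i _))

lemma sub_sub_eq (hx : IsControlAffineSolution f g c x a b)
    (hy : IsControlAffineSolution f g d y a b) (hf : Continuous f) (hg : ∀ i, Continuous (g i))
    (hc : ∀ i, IntegrableOn (c i) (Icc a b)) (hd : ∀ i, IntegrableOn (d i) (Icc a b)) {t : ℝ}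
    (ht : t ∈ Icc a b) :
    x t - y t = x a - y a + ∫ s in a..t,
      (f (x s) - f (y s) + (∑ i, c i s • g i (x s) - ∑ i, d i s • g i (y s))) := by
  have ha : a ∈ Icc a b := left_mem_Icc.2 (ht.1.trans ht.2)
  rw [hx.2 t ht, hy.2 t ht, add_sub_add_comm, ← intervalIntegral.integral_sub
    ((hx.integrableOn hf hg hc).intervalIntegrable_of_mem_Icc ha ht)
    ((hy.integrableOn hf hg hd).intervalIntegrable_of_mem_Icc ha ht)]
  congr 1
  refine intervalIntegral.integral_congr fun s _ => ?_
  abel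

lemma sub_sub_integral_eq (hx : IsControlAffineSolution f g c x a b)
    (hy : IsControlAffineSolution f g d y a b) (hf : Continuous f) (hg : ∀ i, Continuous (g i))
    (hc : ∀ i, IntegrableOn (c i) (Icc a b)) (hd : ∀ i, IntegrableOn (d i) (Icc a b)) {t : ℝ}
    (ht : t ∈ Icc a b) :
    x t - y t - ∫ s in a..t, ∑ i, (c i s - d i s) • g i (x s) = x a - y a + ∫ s in a..t,
      (f (x s) - f (y s) + ∑ i, d i s • (g i (x s) - g i (y s))) := by
  have ha : a ∈ Icc a b := left_mem_Icc.2 (ht.1.trans ht.2)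
  have hgx : ∀ i, ContinuousOn (fun s => g i (x s)) (Icc a b) :=
    fun i => (hg i).comp_continuousOn hx.1
  have hgy : ∀ i, ContinuousOn (fun s => g i (y s)) (Icc a b) :=
    fun i => (hg i).comp_continuousOn hy.1
  have hdiff : IntegrableOn (fun s => f (x s) - f (y s) +
      (∑ i, c i s • g i (x s) - ∑ i, d i s • g i (y s))) (Icc a b) :=
    ((hf.comp_continuousOn hx.1).sub (hf.comp_continuousOn hy.1)).integrableOn_Icc.add
      ((integrableOn_sum_smul hc hgx).sub (integrableOn_sum_smul hd hgy))
  have hq : IntegrableOn (fun s => ∑ i, (c i s - d i s) • g i (x s)) (Icc a b) :=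
    integrableOn_sum_smul (fun i => (hc i).sub (hd i)) hgx
  rw [hx.sub_sub_eq hy hf hg hc hd ht, add_sub_assoc, ← intervalIntegral.integral_sub
    (hdiff.intervalIntegrable_of_mem_Icc ha ht) (hq.intervalIntegrable_of_mem_Icc ha ht)]
  congr 1
  refine intervalIntegral.integral_congr fun s _ => ?_
  simp only [sub_smul, smul_sub, Finset.sum_sub_distrib]
  abel

theorem norm_sub_le_of_isDissipative [CompleteSpace E] {Kg V : ι → ℝ}
    (hx : IsControlAffineSolution f g c x a b) (hy : IsControlAffineSolution f g d y a b)
    (hxy : x a = y a) (hdiss : IsDissipative f) (hf : Continuous f) (hg : ∀ i, Continuous (g i))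
    (hgK : ∀ i z, ‖g i z‖ ≤ Kg i) (hc : ∀ i, IntegrableOn (c i) (Icc a b))
    (hd : ∀ i, IntegrableOn (d i) (Icc a b)) (hcV : ∀ i, ∀ s ∈ Icc a b, |c i s| ≤ V i)
    (hdV : ∀ i, ∀ s ∈ Icc a b, |d i s| ≤ V i) :
    ∀ t ∈ Icc a b, ‖x t - y t‖ ≤ 2 * (∑ i, V i * Kg i) * (t - a) := by
  intro t ht
  have := norm_le_norm_add_integral_of_eventually_norm_add_smul_le (u := x - y)
    (r := fun s => ∑ i, c i s • g i (x s) - ∑ i, d i s • g i (y s))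
    (ρ := fun _ => 2 * ∑ i, V i * Kg i)
    ((hf.comp_continuousOn hx.1).sub (hf.comp_continuousOn hy.1))
    ((integrableOn_sum_smul hc fun i => (hg i).comp_continuousOn hx.1).sub
      (integrableOn_sum_smul hd fun i => (hg i).comp_continuousOn hy.1))
    (integrableOn_const measure_Icc_lt_top.ne)
    (fun s hs => (_root_.norm_sub_le _ _).trans <| by
      linarith [norm_sum_smul_le (fun i => hcV i s hs) fun i => hgK i (x s),
        norm_sum_smul_le (fun i => hdV i s hs) fun i => hgK i (y s)])
    (fun t ht => hx.sub_sub_eq hy hf hg hc hd ht)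
    (fun t _ => hdiss (x t) (y t)) t ht
  simp only [Pi.sub_apply, hxy, sub_self, norm_zero, zero_add, intervalIntegral.integral_const,
    smul_eq_mul] at this
  linarith

theorem norm_sub_sub_integral_le [CompleteSpace E] {L : ℝ} {Kg Lg V : ι → ℝ} (hab : a ≤ b)
    (hx : IsControlAffineSolution f g c x a b) (hy : IsControlAffineSolution f g d y a b)
    (hxy : x a = y a) (hdiss : IsDissipative f) (hf : Differentiable ℝ f)
    (hfL : ∀ z, ‖fderiv ℝ f z‖ ≤ L) (hg : ∀ i, Differentiable ℝ (g i))
    (hgK : ∀ i z, ‖g i z‖ ≤ Kg i) (hgL : ∀ i z, ‖fderiv ℝ (g i) z‖ ≤ Lg i)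
    (hc : ∀ i, IntegrableOn (c i) (Icc a b)) (hd : ∀ i, IntegrableOn (d i) (Icc a b))
    (hcV : ∀ i, ∀ s ∈ Icc a b, |c i s| ≤ V i) (hdV : ∀ i, ∀ s ∈ Icc a b, |d i s| ≤ V i) :
    ‖x b - y b - ∫ s in a..b, ∑ i, (c i s - d i s) • g i (x s)‖ ≤
      (∑ i, V i * Kg i) * (L + ∑ i, V i * Lg i) * (b - a) ^ 2 := by
  set K' := ∑ i, V i * Kg i
  set L' := ∑ i, V i * Lg i
  have hgc : ∀ i, Continuous (g i) := fun i => (hg i).continuous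
  set P := fun t => ∫ s in a..t, ∑ i, (c i s - d i s) • g i (x s)
  have hPc : ContinuousOn P (Icc a b) := continuousOn_primitive_of_integrableOn_Icc
    (integrableOn_sum_smul (fun i => (hc i).sub (hd i)) fun i => (hgc i).comp_continuousOn hx.1)
  have hP : ∀ t ∈ Icc a b, ‖P t‖ ≤ 2 * K' * (t - a) :=
    fun t ht => norm_integral_sum_sub_smul_le hgK hcV hdV ht
  have hE := hx.norm_sub_le_of_isDissipative hy hxy hdiss hf.continuous hgc hgK hc hd hcV hdV
  have hL0 : 0 ≤ L := (norm_nonneg _).trans (hfL 0)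
  have hL'0 : 0 ≤ L' := Finset.sum_nonneg fun i _ => mul_nonneg
    ((abs_nonneg _).trans (hcV i a (left_mem_Icc.2 hab))) ((norm_nonneg _).trans (hgL i 0))
  -- `x - (y + P)` is driven by `f x - f (y + P)` plus a perturbation of size `O(s - a)`
  have hbound := norm_le_norm_add_integral_of_eventually_norm_add_smul_le
    (u := fun t => x t - y t - P t) (F := fun s => f (x s) - f (y s + P s))
    (r := fun s => f (y s + P s) - f (y s) + ∑ i, d i s • (g i (x s) - g i (y s)))
    (ρ := fun s => 2 * (K' * (L + L')) * (s - a))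
    ((hf.continuous.comp_continuousOn hx.1).sub (hf.continuous.comp_continuousOn (hy.1.add hPc)))
    (((hf.continuous.comp_continuousOn (hy.1.add hPc)).sub
      (hf.continuous.comp_continuousOn hy.1)).integrableOn_Icc.add (integrableOn_sum_smul hd
        fun i => ((hgc i).comp_continuousOn hx.1).sub ((hgc i).comp_continuousOn hy.1)))
    (by fun_prop : Continuous fun s => 2 * (K' * (L + L')) * (s - a)).integrableOn_Icc
    (fun s hs => (norm_sub_add_sum_smul_sub_le hf hfL hg hgL (fun i => hdV i s hs) _ _ _).trans
      (by nlinarith [hP s hs, hE s hs, norm_nonneg (P s), norm_nonneg (x s - y s)]))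
    (fun t ht => by
      rw [hx.sub_sub_integral_eq hy hf.continuous hgc hc hd ht,
        show P a = 0 from intervalIntegral.integral_same, sub_zero]
      congr 1
      refine intervalIntegral.integral_congr fun s _ => ?_
      abel)
    (fun t _ => by simpa only [sub_add_eq_sub_sub] using hdiss (x t) (y t + P t))
    b ⟨hab, le_rfl⟩
  have hρb : ∫ s in a..b, 2 * (K' * (L + L')) * (s - a) = K' * (L + L') * (b - a) ^ 2 := by
    rw [intervalIntegral.integral_const_mul, intervalIntegral.integral_comp_sub_right (fun s => s)]
    simp only [sub_self, integral_id]
    ring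
  simpa only [P, hxy, intervalIntegral.integral_same, sub_self, norm_zero, zero_add, hρb]
    using hbound

theorem norm_integral_sub_average_le [CompleteSpace E] {K h : ℝ} {Kg Lg V : ι → ℝ}
    (hx : IsControlAffineSolution f g c x a (a + h)) (hh : 0 < h) (hf : Continuous f)
    (hfK : ∀ z, ‖f z‖ ≤ K) (hg : ∀ i, Differentiable ℝ (g i)) (hgK : ∀ i z, ‖g i z‖ ≤ Kg i)
    (hgL : ∀ i z, ‖fderiv ℝ (g i) z‖ ≤ Lg i) (hc : ∀ i, IntegrableOn (c i) (Icc a (a + h)))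
    (hcV : ∀ i, ∀ s ∈ Icc a (a + h), |c i s| ≤ V i) :
    ‖∫ s in a..a + h, ∑ i, (c i s - (1 / h) * ∫ σ in a..a + h, c i σ) • g i (x s)‖ ≤
      (K + ∑ i, V i * Kg i) * (∑ i, V i * Lg i) * h ^ 2 / 3 := by
  have hgc : ∀ i, Continuous (g i) := fun i => (hg i).continuous
  have hab : a ≤ a + h := by linarith
  have hint : ∀ i, IntervalIntegrable
      (fun s => (c i s - (1 / h) * ∫ σ in a..a + h, c i σ) • g i (x s)) volume a (a + h) :=
    fun i => (((hc i).sub (integrableOn_const measure_Icc_lt_top.ne)).smul_continuousOn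
      ((hgc i).comp_continuousOn hx.1) isCompact_Icc).intervalIntegrable_of_mem_Icc
      (left_mem_Icc.2 hab) (right_mem_Icc.2 hab)
  rw [intervalIntegral.integral_finsetSum fun i _ => hint i]
  calc _ ≤ ∑ i, ‖∫ s in a..a + h, (c i s - (1 / h) * ∫ σ in a..a + h, c i σ) • g i (x s)‖ :=
        norm_sum_le _ _
    _ ≤ ∑ i, V i * (Lg i * (K + ∑ j, V j * Kg j)) * h ^ 2 / 3 :=
        Finset.sum_le_sum fun i _ => norm_integral_sub_average_smul_le hh (hc i) (hcV i)
          fun s hs σ hσ => (norm_sub_le_of_norm_fderiv_le (hg i) (hgL i) _ _).trans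
            (mul_le_mul_of_nonneg_left (hx.norm_sub_le hf hfK hgc hgK hc hcV hσ hs)
              ((norm_nonneg _).trans (hgL i 0)) |>.trans_eq (mul_assoc _ _ _).symm)
    _ = _ := by
        simp only [Finset.mul_sum, Finset.sum_mul, Finset.sum_div]
        exact Finset.sum_congr rfl fun i _ => by ring

end IsControlAffineSolution

end ControlAffine

/-- Second-order local error for the constant (average) input
approximation when `λ∞(Df(z)) ≤ 0`:
`‖x(t_k+h) − y(t_k+h)‖ ≤ h²·( (K+K')·L'/3 + 2·K'·(L+L') )`
with `K' = Σᵢ VᵢKᵢ` and `L' = Σᵢ VᵢLᵢ`. -/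
theorem local_error_second_order_constant_nonpos_lognorm {n m : ℕ}
    (f : (Fin n → ℝ) → (Fin n → ℝ)) (g : Fin m → (Fin n → ℝ) → (Fin n → ℝ))
    (v : Fin m → ℝ → ℝ) (w : Fin m → ℝ)
    (K : ℝ) (Kg : Fin m → ℝ) (L : ℝ) (Lg : Fin m → ℝ) (V : Fin m → ℝ) (tk h : ℝ)
    (x y : ℝ → Fin n → ℝ)
    (hh : 0 < h)
    (hf : ContDiff ℝ 1 f)
    (hK : ∀ z, ‖f z‖ ≤ K)
    (hL : ∀ z, ‖fderiv ℝ f z‖ ≤ L)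
    (hΛ : ∀ z, logNormInf (fderiv ℝ f z) ≤ 0)
    (hg : ∀ i, ContDiff ℝ 1 (g i))
    (hKg : ∀ i z, ‖g i z‖ ≤ Kg i)
    (hLg : ∀ i z, ‖fderiv ℝ (g i) z‖ ≤ Lg i)
    (hv : ∀ i, Measurable (v i))
    (hV : ∀ i, ∀ t ∈ Icc tk (tk + h), |v i t| ≤ V i)
    (hw : ∀ i, w i = (1 / h) * ∫ t in tk..(tk + h), v i t)
    (hxc : ContinuousOn x (Icc tk (tk + h)))
    (hx : ∀ t ∈ Icc tk (tk + h),
      x t = x tk + ∫ s in tk..t, (f (x s) + ∑ i, v i s • g i (x s)))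
    (hyc : ContinuousOn y (Icc tk (tk + h)))
    (hy : ∀ t ∈ Icc tk (tk + h),
      y t = y tk + ∫ s in tk..t, (f (y s) + ∑ i, w i • g i (y s)))
    (hinit : y tk = x tk) :
    ‖x (tk + h) - y (tk + h)‖ ≤
      h ^ 2 * ((K + ∑ i, V i * Kg i) * (∑ i, V i * Lg i) / 3 +
        2 * (∑ i, V i * Kg i) * (L + ∑ i, V i * Lg i)) := by
  have hfd : Differentiable ℝ f := hf.differentiable one_ne_zero
  have hgd : ∀ i, Differentiable ℝ (g i) := fun i => (hg i).differentiable one_ne_zero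
  have hvi : ∀ i, IntegrableOn (v i) (Icc tk (tk + h)) := fun i =>
    IntegrableOn.of_bound measure_Icc_lt_top (hv i).aestronglyMeasurable (V i)
      (ae_restrict_of_forall_mem measurableSet_Icc fun s hs => by simpa using hV i s hs)
  have hwV : ∀ i, ∀ s ∈ Icc tk (tk + h), |w i| ≤ V i :=
    fun i _ _ => hw i ▸ abs_average_le hh (hV i)
  have hx' : IsControlAffineSolution f g v x tk (tk + h) := ⟨hxc, hx⟩
  have hy' : IsControlAffineSolution f g (fun i _ => w i) y tk (tk + h) := ⟨hyc, hy⟩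
  have hψ := hx'.norm_sub_sub_integral_le (by linarith) hy' hinit.symm
    (isDissipative_of_logNormInf_fderiv_nonpos hfd hΛ) hfd hL hgd hKg hLg hvi
    (fun i => integrableOn_const measure_Icc_lt_top.ne) hV hwV
  have hP := hx'.norm_integral_sub_average_le hh hfd.continuous hK hgd hKg hLg hvi hV
  simp only [← hw] at hP
  rw [add_sub_cancel_left] at hψ
  calc ‖x (tk + h) - y (tk + h)‖
      ≤ ‖x (tk + h) - y (tk + h) - ∫ s in tk..tk + h, ∑ i, (v i s - w i) • g i (x s)‖
        + ‖∫ s in tk..tk + h, ∑ i, (v i s - w i) • g i (x s)‖ := norm_le_norm_sub_add _ _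
    _ ≤ _ := by linarith [(norm_nonneg _).trans hψ]
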